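/- arXiv:2204.11389 — 17 statements merged into one kernel-verified Lean document; each statement's English description precedes it below -/
import Mathlib

section
/- If N is a Nijenhuis operator on a Novikov algebra (A,∘), then the deformed product a ∘_N b = N(a)∘b + a∘N(b) − N(a∘b) makes (A,∘_N) a Novikov algebra, and N is a Novikov algebra homomorphism from (A,∘_N) to (A,∘). -/
/-- If `N` is a Nijenhuis operator on a Novikov algebra `(A, mul)`, then the deformed
product `mN` makes `A` a Novikov algebra and `N` is a homomorphism `(A,mN) → (A,mul)`. -/
theorem novikov_nijenhuis_deformed {K A : Type*} [Field K] [AddCommGroup A] [Module K A]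
    (mul : A →ₗ[K] A →ₗ[K] A)
    (hNov1 : ∀ a b c : A, mul (mul a b) c = mul (mul a c) b)
    (hNov2 : ∀ a b c : A,
      mul (mul a b) c - mul a (mul b c) = mul (mul b a) c - mul b (mul a c))
    (N : A →ₗ[K] A)
    (hN : ∀ a b : A, N (mul (N a) b + mul a (N b) - N (mul a b)) = mul (N a) (N b))
    (mN : A → A → A)
    (hmN : ∀ a b : A, mN a b = mul (N a) b + mul a (N b) - N (mul a b)) :
    (∀ a b c : A, mN (mN a b) c = mN (mN a c) b) ∧
    (∀ a b c : A, mN (mN a b) c - mN a (mN b c) = mN (mN b a) c - mN b (mN a c)) ∧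
    (∀ a b : A, N (mN a b) = mul (N a) (N b)) := by
  have h1 : ∀ a b : A, N (mN a b) = mul (N a) (N b) := by
    intro a b; rw [hmN]; exact hN a b
  -- the Nijenhuis identity with N pushed through the sums
  have key : ∀ x y : A, mul (N x) (N y)
      = N (mul (N x) y) + N (mul x (N y)) - N (N (mul x y)) := by
    intro x y; rw [← hN x y, map_sub, map_add]
  have hE : ∀ a b c : A, mN (mN a b) c =
      mul (mul (N a) (N b)) c + mul (mul (N a) b) (N c) + mul (mul a (N b)) (N c)
        - N (mul (mul (N a) b) c) - N (mul (mul a (N b)) c) - N (mul (mul a b) (N c))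
        + N (N (mul (mul a b) c)) := by
    intro a b c
    rw [hmN (mN a b) c, h1 a b, hmN a b]
    simp only [map_add, map_sub, LinearMap.add_apply, LinearMap.sub_apply]
    rw [key (mul a b) c]
    abel
  have hF : ∀ a b c : A, mN a (mN b c) =
      mul (N a) (mul (N b) c) + mul (N a) (mul b (N c)) + mul a (mul (N b) (N c))
        - N (mul (N a) (mul b c)) - N (mul a (mul (N b) c)) - N (mul a (mul b (N c)))
        + N (N (mul a (mul b c))) := by
    intro a b c
    rw [hmN a (mN b c), h1 b c, hmN b c]
    simp only [map_add, map_sub, LinearMap.add_apply, LinearMap.sub_apply]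
    rw [key a (mul b c)]
    abel
  refine ⟨?_, ?_, h1⟩
  · intro a b c
    rw [hE a b c, hE a c b, hNov1 (N a) (N b) c, hNov1 (N a) b (N c), hNov1 a (N b) (N c),
      hNov1 (N a) b c, hNov1 a (N b) c, hNov1 a b (N c), hNov1 a b c]
    abel
  · intro a b c
    have g4 : N (mul (mul (N a) b) c) - N (mul (N a) (mul b c))
        = N (mul (mul b (N a)) c) - N (mul b (mul (N a) c)) := by
      simpa [map_sub] using congrArg N (hNov2 (N a) b c)
    have g5 : N (mul (mul a (N b)) c) - N (mul a (mul (N b) c))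
        = N (mul (mul (N b) a) c) - N (mul (N b) (mul a c)) := by
      simpa [map_sub] using congrArg N (hNov2 a (N b) c)
    have g6 : N (mul (mul a b) (N c)) - N (mul a (mul b (N c)))
        = N (mul (mul b a) (N c)) - N (mul b (mul a (N c))) := by
      simpa [map_sub] using congrArg N (hNov2 a b (N c))
    have g7 : N (N (mul (mul a b) c)) - N (N (mul a (mul b c)))
        = N (N (mul (mul b a) c)) - N (N (mul b (mul a c))) := by
      simpa [map_sub] using congrArg N (congrArg N (hNov2 a b c))
    rw [hE a b c, hF a b c, hE b a c, hF b a c]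
    linear_combination (norm := module) hNov2 (N a) (N b) c + hNov2 (N a) b (N c)
      + hNov2 a (N b) (N c) - g4 - g5 - g6 + g7
end

section
/- If N is a Nijenhuis operator on a Gel'fand-Dorfman bialgebra (A,[·,·],∘), then (A,[·,·]_N,∘_N) is again a Gel'fand-Dorfman bialgebra, where [a,b]_N = [N(a),b] + [a,N(b)] − N([a,b]) and a∘_N b = N(a)∘b + a∘N(b) − N(a∘b); moreover N is a homomorphism from (A,[·,·]_N,∘_N) to (A,[·,·],∘). -/
section Defs

variable {K A V : Type*} [Field K] [LieRing A] [LieAlgebra K A]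
  [AddCommGroup V] [Module K V]

/-- A Nijenhuis operator on a Lie algebra. -/
def IsNijenhuis (N : A →ₗ[K] A) : Prop :=
  ∀ a b : A, N (⁅N a, b⁆ + ⁅a, N b⁆ - N ⁅a, b⁆) = ⁅N a, N b⁆

/-- `ρ` is a representation of the Lie algebra `A` on `V`. -/
def IsRep (ρ : A →ₗ[K] V →ₗ[K] V) : Prop :=
  ∀ (a b : A) (v : V), ρ ⁅a, b⁆ v = ρ a (ρ b v) - ρ b (ρ a v)

/-- An O-operator on a Lie algebra with representation `ρ`. -/
def IsOOperator (ρ : A →ₗ[K] V →ₗ[K] V) (T : V →ₗ[K] A) : Prop :=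
  ∀ u v : V, ⁅T u, T v⁆ = T (ρ (T u) v - ρ (T v) u)

/-- Two O-operators are compatible if every linear combination is an O-operator. -/
def Compatible (ρ : A →ₗ[K] V →ₗ[K] V) (T₁ T₂ : V →ₗ[K] A) : Prop :=
  ∀ k₁ k₂ : K, IsOOperator ρ (k₁ • T₁ + k₂ • T₂)

/-- A Nijenhuis structure on a Lie algebra with representation `ρ`. -/
def IsNijenhuisStructure (ρ : A →ₗ[K] V →ₗ[K] V) (N : A →ₗ[K] A) (S : V →ₗ[K] V) : Prop :=
  IsNijenhuis N ∧
    ∀ (a : A) (v : V), ρ (N a) (S v) = S (ρ (N a) v) + ρ a (S (S v)) - S (ρ a (S v))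

/-- An ON-structure on a Lie algebra with representation `ρ`. -/
def IsONStructure (ρ : A →ₗ[K] V →ₗ[K] V) (T : V →ₗ[K] A) (N : A →ₗ[K] A)
    (S : V →ₗ[K] V) : Prop :=
  IsOOperator ρ T ∧ IsNijenhuisStructure ρ N S ∧ N ∘ₗ T = T ∘ₗ S ∧
    ∀ u v : V, ρ (N (T u)) v - ρ (N (T v)) u =
      (ρ (T (S u)) v - ρ (T v) (S u)) + (ρ (T u) (S v) - ρ (T (S v)) u)
        - S (ρ (T u) v - ρ (T v) u)

end Defs

/-- A Nijenhuis operator on a Gel'fand-Dorfman bialgebra deforms it into a new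
Gel'fand-Dorfman bialgebra, and `N` is a homomorphism of the deformed structure
to the original one. -/
theorem gd_bialgebra_nijenhuis_deformed {K A : Type*} [Field K] [LieRing A] [LieAlgebra K A]
    (mul : A →ₗ[K] A →ₗ[K] A)
    (hNov1 : ∀ a b c : A, mul (mul a b) c = mul (mul a c) b)
    (hNov2 : ∀ a b c : A,
      mul (mul a b) c - mul a (mul b c) = mul (mul b a) c - mul b (mul a c))
    (hGD : ∀ a b c : A,
      ⁅mul a b, c⁆ + mul ⁅a, b⁆ c - mul a ⁅b, c⁆ - ⁅mul a c, b⁆ - mul ⁅a, c⁆ b = 0)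
    (N : A →ₗ[K] A)
    (hNLie : IsNijenhuis N)
    (hNNov : ∀ a b : A, N (mul (N a) b + mul a (N b) - N (mul a b)) = mul (N a) (N b))
    (brN : A → A → A)
    (hbrN : ∀ a b : A, brN a b = ⁅N a, b⁆ + ⁅a, N b⁆ - N ⁅a, b⁆)
    (mN : A → A → A)
    (hmN : ∀ a b : A, mN a b = mul (N a) b + mul a (N b) - N (mul a b)) :
    -- (A, brN) is a Lie algebra (skew-symmetry and the Jacobi identity)
    (∀ a b : A, brN a b = - brN b a) ∧
    (∀ a b c : A, brN a (brN b c) = brN (brN a b) c + brN b (brN a c)) ∧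
    -- (A, mN) is a Novikov algebra
    (∀ a b c : A, mN (mN a b) c = mN (mN a c) b) ∧
    (∀ a b c : A, mN (mN a b) c - mN a (mN b c) = mN (mN b a) c - mN b (mN a c)) ∧
    -- the Gel'fand-Dorfman compatibility condition for the deformed structure
    (∀ a b c : A,
      brN (mN a b) c + mN (brN a b) c - mN a (brN b c)
        - brN (mN a c) b - mN (brN a c) b = 0) ∧
    -- N is a homomorphism of Gel'fand-Dorfman bialgebras
    (∀ a b : A, N (brN a b) = ⁅N a, N b⁆) ∧
    (∀ a b : A, N (mN a b) = mul (N a) (N b)) := by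
  have hskw : ∀ x y : A, ⁅x, y⁆ = -⁅y, x⁆ := fun x y => (lie_skew x y).symm
  have hN' : ∀ x y : A, N (⁅N x, y⁆) + N (⁅x, N y⁆) - N (N (⁅x, y⁆)) = ⁅N x, N y⁆ := by
    intro x y; rw [← map_add, ← map_sub]; exact hNLie x y
  have hM' : ∀ x y : A,
      N (mul (N x) y) + N (mul x (N y)) - N (N (mul x y)) = mul (N x) (N y) := by
    intro x y; rw [← map_add, ← map_sub]; exact hNNov x y
  refine ⟨?_, ?_, ?_, ?_, ?_, ?_, ?_⟩
  · -- skew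
    intro a b
    simp only [hbrN, hmN, map_add, map_sub, lie_add, lie_sub, add_lie, sub_lie,
      LinearMap.add_apply, LinearMap.sub_apply]
    have Eskew1 : N (⁅a, b⁆) = -N (⁅b, a⁆) := by
      rw [hskw a b, map_neg]
    linear_combination (norm := abel) (hskw (a) (N b)) - Eskew1 + (hskw (b) (N a))
  · -- jac
    intro a b c
    simp only [hbrN, hmN, map_add, map_sub, lie_add, lie_sub, add_lie, sub_lie,
      LinearMap.add_apply, LinearMap.sub_apply]
    have Ejac1 : ⁅a, N (⁅N b, c⁆)⁆ + ⁅a, N (⁅b, N c⁆)⁆ - ⁅a, N (N (⁅b, c⁆))⁆ = ⁅a, ⁅N b, N c⁆⁆ := by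
      simpa using congrArg (fun t => ⁅a, t⁆) (hN' (b) (c))
    have Ejac2 : N (⁅a, ⁅N b, c⁆⁆) = N (⁅⁅a, N b⁆, c⁆) + N (⁅N b, ⁅a, c⁆⁆) := by
      simpa using congrArg (fun t => N (t)) (leibniz_lie (a) (N b) (c))
    have Ejac3 : N (⁅a, ⁅b, N c⁆⁆) = N (⁅⁅a, b⁆, N c⁆) + N (⁅b, ⁅a, N c⁆⁆) := by
      simpa using congrArg (fun t => N (t)) (leibniz_lie (a) (b) (N c))
    have Ejac5 : ⁅N (⁅N a, b⁆), c⁆ + ⁅N (⁅a, N b⁆), c⁆ - ⁅N (N (⁅a, b⁆)), c⁆ = ⁅⁅N a, N b⁆, c⁆ := by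
      simpa using congrArg (fun t => ⁅t, c⁆) (hN' (a) (b))
    have Ejac8 : N (⁅N a, ⁅b, c⁆⁆) = N (⁅⁅N a, b⁆, c⁆) + N (⁅b, ⁅N a, c⁆⁆) := by
      simpa using congrArg (fun t => N (t)) (leibniz_lie (N a) (b) (c))
    have Ejac10 : N (N (⁅a, ⁅b, c⁆⁆)) = N (N (⁅⁅a, b⁆, c⁆)) + N (N (⁅b, ⁅a, c⁆⁆)) := by
      simpa using congrArg (fun t => N (N (t))) (leibniz_lie (a) (b) (c))
    have Ejac11 : ⁅b, N (⁅N a, c⁆)⁆ + ⁅b, N (⁅a, N c⁆)⁆ - ⁅b, N (N (⁅a, c⁆))⁆ = ⁅b, ⁅N a, N c⁆⁆ := by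
      simpa using congrArg (fun t => ⁅b, t⁆) (hN' (a) (c))
    linear_combination (norm := abel) (leibniz_lie (N a) (N b) (c)) + Ejac1 - Ejac2 - Ejac3 + (hN' (a) (⁅b, c⁆)) - Ejac5 + (leibniz_lie (N a) (b) (N c)) + (leibniz_lie (a) (N b) (N c)) - Ejac8 - (hN' (⁅a, b⁆) (c)) + Ejac10 - Ejac11 - (hN' (b) (⁅a, c⁆))
  · -- nov1
    intro a b c
    simp only [hbrN, hmN, map_add, map_sub, lie_add, lie_sub, add_lie, sub_lie,
      LinearMap.add_apply, LinearMap.sub_apply]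
    have Enov10 : mul (N (mul (N a) b)) c + mul (N (mul a (N b))) c - mul (N (N (mul a b))) c = mul (mul (N a) (N b)) c := by
      simpa using congrArg (fun t => mul t c) (hM' (a) (b))
    have Enov13 : N (mul (mul (N a) b) c) = N (mul (mul (N a) c) b) := by
      simpa using congrArg (fun t => N (t)) (hNov1 (N a) (b) (c))
    have Enov15 : N (mul (mul a b) (N c)) = N (mul (mul a (N c)) b) := by
      simpa using congrArg (fun t => N (t)) (hNov1 (a) (b) (N c))
    have Enov16 : N (N (mul (mul a b) c)) = N (N (mul (mul a c) b)) := by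
      simpa using congrArg (fun t => N (N (t))) (hNov1 (a) (b) (c))
    have Enov17 : mul (N (mul (N a) c)) b + mul (N (mul a (N c))) b - mul (N (N (mul a c))) b = mul (mul (N a) (N c)) b := by
      simpa using congrArg (fun t => mul t b) (hM' (a) (c))
    have Enov110 : N (mul (mul a c) (N b)) = N (mul (mul a (N b)) c) := by
      simpa using congrArg (fun t => N (t)) (hNov1 (a) (c) (N b))
    linear_combination (norm := abel) Enov10 + (hNov1 (N a) (b) (N c)) + (hNov1 (a) (N b) (N c)) - Enov13 + (hM' (mul a b) (c)) - Enov15 + Enov16 - Enov17 - (hNov1 (N a) (c) (N b)) - (hM' (mul a c) (b)) + Enov110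
  · -- nov2
    intro a b c
    simp only [hbrN, hmN, map_add, map_sub, lie_add, lie_sub, add_lie, sub_lie,
      LinearMap.add_apply, LinearMap.sub_apply]
    have Enov20 : mul (N (mul (N a) b)) c + mul (N (mul a (N b))) c - mul (N (N (mul a b))) c = mul (mul (N a) (N b)) c := by
      simpa using congrArg (fun t => mul t c) (hM' (a) (b))
    have Enov22 : N (mul (mul a (N b)) c) - N (mul a (mul (N b) c)) = N (mul (mul (N b) a) c) - N (mul (N b) (mul a c)) := by
      simpa using congrArg (fun t => N (t)) (hNov2 (a) (N b) (c))
    have Enov24 : mul a (N (mul (N b) c)) + mul a (N (mul b (N c))) - mul a (N (N (mul b c))) = mul a (mul (N b) (N c)) := by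
      simpa using congrArg (fun t => mul a t) (hM' (b) (c))
    have Enov26 : N (mul (mul a b) (N c)) - N (mul a (mul b (N c))) = N (mul (mul b a) (N c)) - N (mul b (mul a (N c))) := by
      simpa using congrArg (fun t => N (t)) (hNov2 (a) (b) (N c))
    have Enov27 : mul (N (mul (N b) a)) c + mul (N (mul b (N a))) c - mul (N (N (mul b a))) c = mul (mul (N b) (N a)) c := by
      simpa using congrArg (fun t => mul t c) (hM' (b) (a))
    have Enov28 : N (mul (mul b (N a)) c) - N (mul b (mul (N a) c)) = N (mul (mul (N a) b) c) - N (mul (N a) (mul b c)) := by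
      simpa using congrArg (fun t => N (t)) (hNov2 (b) (N a) (c))
    have Enov210 : mul b (N (mul (N a) c)) + mul b (N (mul a (N c))) - mul b (N (N (mul a c))) = mul b (mul (N a) (N c)) := by
      simpa using congrArg (fun t => mul b t) (hM' (a) (c))
    have Enov214 : N (N (mul (mul a b) c)) - N (N (mul a (mul b c))) = N (N (mul (mul b a) c)) - N (N (mul b (mul a c))) := by
      simpa using congrArg (fun t => N (N (t))) (hNov2 (a) (b) (c))
    linear_combination (norm := abel) Enov20 + (hNov2 (N a) (N b) (c)) - Enov22 + (hM' (mul a b) (c)) - Enov24 + (hNov2 (a) (N b) (N c)) - Enov26 - Enov27 + Enov28 - (hM' (mul b a) (c)) + Enov210 - (hNov2 (b) (N a) (N c)) + (hM' (b) (mul a c)) - (hM' (a) (mul b c)) + Enov214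
  · -- gd
    intro a b c
    simp only [hbrN, hmN, map_add, map_sub, lie_add, lie_sub, add_lie, sub_lie,
      LinearMap.add_apply, LinearMap.sub_apply]
    have Egd0 : ⁅N (mul (N a) b), c⁆ + ⁅N (mul a (N b)), c⁆ - ⁅N (N (mul a b)), c⁆ = ⁅mul (N a) (N b), c⁆ := by
      simpa using congrArg (fun t => ⁅t, c⁆) (hM' (a) (b))
    have Egd3 : N (⁅mul (N a) b, c⁆) + N (mul (⁅N a, b⁆) c) - N (mul (N a) (⁅b, c⁆)) - N (⁅mul (N a) c, b⁆) - N (mul (⁅N a, c⁆) b) = (0 : A) := by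
      simpa using congrArg (fun t => N (t)) (hGD (N a) (b) (c))
    have Egd5 : N (⁅mul a b, N c⁆) + N (mul (⁅a, b⁆) (N c)) - N (mul a (⁅b, N c⁆)) - N (⁅mul a (N c), b⁆) - N (mul (⁅a, N c⁆) b) = (0 : A) := by
      simpa using congrArg (fun t => N (t)) (hGD (a) (b) (N c))
    have Egd6 : N (N (⁅mul a b, c⁆)) + N (N (mul (⁅a, b⁆) c)) - N (N (mul a (⁅b, c⁆))) - N (N (⁅mul a c, b⁆)) - N (N (mul (⁅a, c⁆) b)) = (0 : A) := by
      simpa using congrArg (fun t => N (N (t))) (hGD (a) (b) (c))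
    have Egd7 : mul (N (⁅N a, b⁆)) c + mul (N (⁅a, N b⁆)) c - mul (N (N (⁅a, b⁆))) c = mul (⁅N a, N b⁆) c := by
      simpa using congrArg (fun t => mul t c) (hN' (a) (b))
    have Egd9 : mul a (N (⁅N b, c⁆)) + mul a (N (⁅b, N c⁆)) - mul a (N (N (⁅b, c⁆))) = mul a (⁅N b, N c⁆) := by
      simpa using congrArg (fun t => mul a t) (hN' (b) (c))
    have Egd11 : ⁅N (mul (N a) c), b⁆ + ⁅N (mul a (N c)), b⁆ - ⁅N (N (mul a c)), b⁆ = ⁅mul (N a) (N c), b⁆ := by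
      simpa using congrArg (fun t => ⁅t, b⁆) (hM' (a) (c))
    have Egd13 : mul (N a) (⁅c, N b⁆) = -mul (N a) (⁅N b, c⁆) := by
      rw [hskw c (N b), map_neg]
    have Egd15 : N (⁅mul a c, N b⁆) + N (mul (⁅a, c⁆) (N b)) - N (mul a (⁅c, N b⁆)) - N (⁅mul a (N b), c⁆) - N (mul (⁅a, N b⁆) c) = (0 : A) := by
      simpa using congrArg (fun t => N (t)) (hGD (a) (c) (N b))
    have Egd16 : N (mul a (⁅c, N b⁆)) = -N (mul a (⁅N b, c⁆)) := by
      rw [hskw c (N b), map_neg, map_neg]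
    have Egd17 : mul (N (⁅N a, c⁆)) b + mul (N (⁅a, N c⁆)) b - mul (N (N (⁅a, c⁆))) b = mul (⁅N a, N c⁆) b := by
      simpa using congrArg (fun t => mul t b) (hN' (a) (c))
    linear_combination (norm := abel) Egd0 + (hGD (N a) (b) (N c)) + (hGD (a) (N b) (N c)) - Egd3 + (hN' (mul a b) (c)) - Egd5 + Egd6 + Egd7 + (hM' (⁅a, b⁆) (c)) - Egd9 - (hM' (a) (⁅b, c⁆)) - Egd11 - (hGD (N a) (c) (N b)) - Egd13 - (hN' (mul a c) (b)) + Egd15 + Egd16 - Egd17 - (hM' (⁅a, c⁆) (b))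
  · -- hom Lie
    intro a b
    rw [hbrN]
    exact hNLie a b
  · -- hom Novikov
    intro a b
    rw [hmN]
    exact hNNov a b
end

section
/- Let (V;ρ) be a representation of a Lie algebra A and (N,S) a Nijenhuis structure on the pair (A;ρ). Then for every natural number i, the pair (Nⁱ, Sⁱ) is also a Nijenhuis structure on (A;ρ). -/
/-- Powers of a Nijenhuis structure are again Nijenhuis structures. -/
theorem nijenhuis_structure_pow {K A V : Type*} [Field K] [LieRing A] [LieAlgebra K A]
    [AddCommGroup V] [Module K V]
    (ρ : A →ₗ[K] V →ₗ[K] V) (hρ : IsRep ρ)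
    (N : A →ₗ[K] A) (S : V →ₗ[K] V)
    (hNS : IsNijenhuisStructure ρ N S) :
    ∀ i : ℕ, IsNijenhuisStructure ρ (N ^ i) (S ^ i) := by
  obtain ⟨hNij, hS⟩ := hNS
  have hN' : ∀ a b : A, ⁅N a, N b⁆ = N ⁅N a, b⁆ + N ⁅a, N b⁆ - N (N ⁅a, b⁆) := by
    intro a b
    rw [← hNij a b]
    simp only [map_add, map_sub]
  have hc : ∀ (k : ℕ) (x : A), (N ^ k) (N x) = N ((N ^ k) x) := by
    intro k x
    rw [← Module.End.mul_apply, ← Module.End.mul_apply, ← pow_succ, pow_succ']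
  have compat : ∀ (k : ℕ) (a b : A),
      ⁅N a, (N ^ k) b⁆ + ⁅(N ^ k) a, N b⁆ =
        N ⁅(N ^ k) a, b⁆ + N ⁅a, (N ^ k) b⁆ + (N ^ k) ⁅N a, b⁆ + (N ^ k) ⁅a, N b⁆
          - N ((N ^ k) ⁅a, b⁆) - N ((N ^ k) ⁅a, b⁆) := by
    intro k
    induction k with
    | zero =>
      intro a b
      simp only [pow_zero, Module.End.one_apply]
      abel
    | succ k ih =>
      intro a b
      have ih' : ⁅N a, (N ^ k) b⁆ = (N ⁅(N ^ k) a, b⁆ + N ⁅a, (N ^ k) b⁆ + (N ^ k) ⁅N a, b⁆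
          + (N ^ k) ⁅a, N b⁆ - N ((N ^ k) ⁅a, b⁆) - N ((N ^ k) ⁅a, b⁆)) - ⁅(N ^ k) a, N b⁆ :=
        eq_sub_of_add_eq (ih a b)
      simp only [pow_succ', Module.End.mul_apply]
      rw [hN' a ((N ^ k) b), hN' ((N ^ k) a) b, ih']
      simp only [map_add, map_sub]
      abel
  have hpow : ∀ (i : ℕ) (a b : A),
      (N ^ i) (⁅(N ^ i) a, b⁆ + ⁅a, (N ^ i) b⁆ - (N ^ i) ⁅a, b⁆) = ⁅(N ^ i) a, (N ^ i) b⁆ := by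
    intro i
    induction i with
    | zero =>
      intro a b
      simp only [pow_zero, Module.End.one_apply]
      abel
    | succ k ih =>
      intro a b
      simp only [pow_succ', Module.End.mul_apply]
      have key : N (⁅N ((N ^ k) a), b⁆ + ⁅a, N ((N ^ k) b)⁆ - N ((N ^ k) ⁅a, b⁆))
          = ⁅N ((N ^ k) a), N b⁆ + ⁅N a, N ((N ^ k) b)⁆ - (N ^ k) ⁅N a, N b⁆ := by
        rw [hN' ((N ^ k) a) b, hN' a ((N ^ k) b), hN' a b]
        have hcap := congrArg N (compat k a b)
        simp only [map_add, map_sub] at hcap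
        have hcap' := eq_sub_of_add_eq hcap
        simp only [map_add, map_sub, hc]
        rw [hcap']
        abel
      have ihab := ih (N a) (N b)
      simp only [hc] at ihab
      rw [← ihab, ← key]
      exact (hc k _).symm
  have hL : ∀ (j : ℕ) (a : A) (v : V),
      ρ (N a) ((S ^ j) v) - (S ^ j) (ρ (N a) v) =
        ρ a ((S ^ j) (S v)) - (S ^ j) (ρ a (S v)) := by
    intro j
    induction j with
    | zero =>
      intro a v
      simp only [pow_zero, Module.End.one_apply]
      abel
    | succ j ih =>
      intro a v
      simp only [pow_succ, Module.End.mul_apply]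
      have h1 : ρ (N a) ((S ^ j) (S v)) =
          (ρ a ((S ^ j) (S (S v))) - (S ^ j) (ρ a (S (S v)))) + (S ^ j) (ρ (N a) (S v)) :=
        sub_eq_iff_eq_add.mp (ih a (S v))
      rw [h1, hS a v]
      simp only [map_add, map_sub]
      abel
  have hM : ∀ (i j : ℕ) (a : A) (v : V),
      ρ ((N ^ i) a) ((S ^ j) v) - (S ^ j) (ρ ((N ^ i) a) v) =
        ρ a ((S ^ j) ((S ^ i) v)) - (S ^ j) (ρ a ((S ^ i) v)) := by
    intro i
    induction i with
    | zero =>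
      intro j a v
      simp only [pow_zero, Module.End.one_apply]
    | succ i ih =>
      intro j a v
      have e1 : (N ^ (i + 1)) a = (N ^ i) (N a) := by
        rw [pow_succ, Module.End.mul_apply]
      have e2 : (S ^ (i + 1)) v = S ((S ^ i) v) := by
        rw [pow_succ', Module.End.mul_apply]
      rw [e1, e2]
      exact (ih j (N a) v).trans (hL j a ((S ^ i) v))
  intro i
  refine ⟨fun a b => hpow i a b, fun a v => ?_⟩
  have h := sub_eq_iff_eq_add.mp (hM i i a v)
  rw [h]
  abel
end

section
/- Let N be a Nijenhuis operator on a Lie algebra A. Then the pair (N, N*) is a Nijenhuis structure on A with respect to the coadjoint representation ad* on the dual space A*, where N* is the dual map of N and ad*(a)(α) = −α∘ad(a). -/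
/-- For a Nijenhuis operator `N` on a Lie algebra `A`, the pair `(N, N*)` is a Nijenhuis
structure with respect to the coadjoint representation. -/
theorem nijenhuis_structure_coadjoint {K A : Type*} [Field K] [LieRing A] [LieAlgebra K A]
    (N : A →ₗ[K] A) (hN : IsNijenhuis N)
    (coad : A → Module.Dual K A → Module.Dual K A)
    (hcoad : ∀ (a : A) (α : Module.Dual K A) (b : A), coad a α b = - α ⁅a, b⁆) :
    IsNijenhuis N ∧
      ∀ (a : A) (α : Module.Dual K A),
        coad (N a) (N.dualMap α) =
          N.dualMap (coad (N a) α) + coad a (N.dualMap (N.dualMap α))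
            - N.dualMap (coad a (N.dualMap α)) := by
  refine ⟨hN, fun a α => ?_⟩
  ext b
  have h := congrArg α (hN a b)
  simp only [map_add, map_sub] at h
  simp only [LinearMap.add_apply, LinearMap.sub_apply, LinearMap.dualMap_apply', hcoad,
    LinearMap.dualMap_apply, LinearMap.comp_apply]

  linear_combination -h
end

section
/- Let T : V → A be an O-operator on a Lie algebra A with representation (V;ρ). Then the bracket [u,v]^T = ρ(T(u))(v) − ρ(T(v))(u) defines a Lie algebra structure on V, and T is a Lie algebra homomorphism from (V,[·,·]^T) to A. -/
/-- An O-operator `T` induces a Lie bracket on `V`, and `T` is a Lie algebra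
homomorphism from `(V, [·,·]^T)` to `A`. -/
theorem ooperator_induced_lie {K A V : Type*} [Field K] [LieRing A] [LieAlgebra K A]
    [AddCommGroup V] [Module K V]
    (ρ : A →ₗ[K] V →ₗ[K] V) (hρ : IsRep ρ)
    (T : V →ₗ[K] A) (hT : IsOOperator ρ T)
    (brT : V → V → V)
    (hbrT : ∀ u v : V, brT u v = ρ (T u) v - ρ (T v) u) :
    (∀ u v : V, brT u v = - brT v u) ∧
    (∀ u v w : V, brT u (brT v w) = brT (brT u v) w + brT v (brT u w)) ∧
    (∀ u v : V, T (brT u v) = ⁅T u, T v⁆) := by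
  have hTbr : ∀ u v : V, T (brT u v) = ⁅T u, T v⁆ := by
    intro u v
    rw [hbrT, ← hT]
  refine ⟨?_, ?_, hTbr⟩
  · intro u v
    simp only [hbrT]
    abel
  · intro u v w
    rw [hbrT u (brT v w), hbrT (brT u v) w, hbrT v (brT u w),
      hTbr, hTbr, hTbr, hρ, hρ, hρ, hbrT v w, hbrT u v, hbrT u w]
    simp only [map_sub, LinearMap.sub_apply]
    abel
end

section
/- Two O-operators T₁, T₂ : V → A on a Lie algebra A with representation (V;ρ) are compatible (i.e. every linear combination k₁T₁ + k₂T₂ is again an O-operator) if and only if [T₁(u),T₂(v)] + [T₂(u),T₁(v)] = T₁(ρ(T₂(u))(v) − ρ(T₂(v))(u)) + T₂(ρ(T₁(u))(v) − ρ(T₁(v))(u)) for all u,v ∈ V. -/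
/-- Two O-operators are compatible if and only if the mixed O-operator identity holds. -/
theorem ooperators_compatible_iff {K A V : Type*} [Field K] [LieRing A] [LieAlgebra K A]
    [AddCommGroup V] [Module K V]
    (ρ : A →ₗ[K] V →ₗ[K] V) (hρ : IsRep ρ)
    (T₁ T₂ : V →ₗ[K] A) (h₁ : IsOOperator ρ T₁) (h₂ : IsOOperator ρ T₂) :
    Compatible ρ T₁ T₂ ↔
      ∀ u v : V, ⁅T₁ u, T₂ v⁆ + ⁅T₂ u, T₁ v⁆ =
        T₁ (ρ (T₂ u) v - ρ (T₂ v) u) + T₂ (ρ (T₁ u) v - ρ (T₁ v) u) := by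

  constructor
  · intro h u v
    have H := h 1 1 u v
    simp only [one_smul, LinearMap.add_apply, map_add, lie_add, add_lie] at H
    rw [h₁ u v, h₂ u v] at H
    -- H : T₁ X₁ + T₂v bracket... rearrange
    have e : T₁ (ρ (T₁ u) v - ρ (T₁ v) u) + (T₁ (ρ (T₂ u) v - ρ (T₂ v) u) + T₂ (ρ (T₁ u) v - ρ (T₁ v) u)) + T₂ (ρ (T₂ u) v - ρ (T₂ v) u) = T₁ (ρ (T₁ u) v + ρ (T₂ u) v - (ρ (T₁ v) u + ρ (T₂ v) u)) + T₂ (ρ (T₁ u) v + ρ (T₂ u) v - (ρ (T₁ v) u + ρ (T₂ v) u)) := by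
      simp only [map_add, map_sub]
      abel
    rw [← e] at H
    linear_combination (norm := abel) H
  · intro h k₁ k₂ u v
    simp only [LinearMap.add_apply, LinearMap.smul_apply, map_add, map_smul, lie_add, add_lie,
      lie_smul, smul_lie, map_sub, smul_add, smul_sub]
    rw [h₁ u v, h₂ u v]
    have H := h u v
    have H' : (k₁ * k₂) • (⁅T₁ u, T₂ v⁆ + ⁅T₂ u, T₁ v⁆) = (k₁ * k₂) • (T₁ (ρ (T₂ u) v - ρ (T₂ v) u) + T₂ (ρ (T₁ u) v - ρ (T₁ v) u)) := by rw [H]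
    simp only [map_sub, smul_add, smul_sub, mul_smul] at H' ⊢
    linear_combination (norm := module) H'
end

section
/- Let T be an O-operator on a Lie algebra A with representation (V;ρ), and let N be an invertible Nijenhuis operator on A such that N∘T is also an O-operator. Then T and N∘T are compatible O-operators. -/
/-- If `T` is an O-operator and `N` an invertible Nijenhuis operator such that `N ∘ T`
is also an O-operator, then `T` and `N ∘ T` are compatible. -/
theorem ooperator_compatible_of_invertible_nijenhuis {K A V : Type*} [Field K] [LieRing A]
    [LieAlgebra K A] [AddCommGroup V] [Module K V]
    (ρ : A →ₗ[K] V →ₗ[K] V) (hρ : IsRep ρ)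
    (T : V →ₗ[K] A) (hT : IsOOperator ρ T)
    (N : A ≃ₗ[K] A) (hN : IsNijenhuis (N : A →ₗ[K] A))
    (hNT : IsOOperator ρ ((N : A →ₗ[K] A) ∘ₗ T)) :
    Compatible ρ T ((N : A →ₗ[K] A) ∘ₗ T) := by
  have key : ∀ u v : V, ⁅T u, N (T v)⁆ + ⁅N (T u), T v⁆ =
      T (ρ (N (T u)) v - ρ (N (T v)) u) + N (T (ρ (T u) v - ρ (T v) u)) := by
    intro u v
    apply N.injective
    have h1 := hN (T u) (T v)
    have h2 := hNT u v
    have h3 := hT u v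
    simp only [LinearMap.coe_comp, Function.comp_apply, LinearEquiv.coe_coe, map_add,
      map_sub] at h1 h2 h3 ⊢
    rw [h3] at h1
    simp only [map_sub] at h1
    linear_combination (norm := module) h1 + h2
  intro k₁ k₂ u v
  have h3 := hT u v
  have h4 := hNT u v
  have h5 := key u v
  simp only [LinearMap.coe_comp, Function.comp_apply, LinearEquiv.coe_coe,
    LinearMap.add_apply, LinearMap.smul_apply, map_add, map_smul, map_sub, lie_add,
    add_lie, smul_lie, lie_smul] at h3 h4 h5 ⊢
  rw [h3, h4]
  linear_combination (norm := module) (k₁ * k₂) • h5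
end

section
/- Let T₁, T₂ be O-operators on a Lie algebra A with representation (V;ρ), with T₂ invertible. If T₁ and T₂ are compatible, then N = T₁∘T₂⁻¹ is a Nijenhuis operator on the Lie algebra A. -/
/-- If `T₁` and `T₂` are compatible O-operators and `T₂` is invertible, then
`N = T₁ ∘ T₂⁻¹` is a Nijenhuis operator. -/
theorem nijenhuis_of_compatible_ooperators {K A V : Type*} [Field K] [LieRing A]
    [LieAlgebra K A] [AddCommGroup V] [Module K V]
    (ρ : A →ₗ[K] V →ₗ[K] V) (hρ : IsRep ρ)
    (T₁ : V →ₗ[K] A) (h₁ : IsOOperator ρ T₁)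
    (T₂ : V ≃ₗ[K] A) (h₂ : IsOOperator ρ (T₂ : V →ₗ[K] A))
    (hcomp : Compatible ρ T₁ (T₂ : V →ₗ[K] A)) :
    IsNijenhuis (T₁ ∘ₗ (T₂.symm : A →ₗ[K] V)) := by
  -- the mixed compatibility identity
  have hmix : ∀ u v : V, ⁅T₁ u, T₂ v⁆ + ⁅(T₂ u : A), T₁ v⁆ =
      T₁ (ρ (T₂ u) v - ρ (T₂ v) u) + T₂ (ρ (T₁ u) v - ρ (T₁ v) u) := by
    intro u v
    have h := hcomp 1 1 u v
    simp only [one_smul, LinearMap.add_apply, LinearEquiv.coe_coe] at h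
    have e1 := h₁ u v
    have e2 := h₂ u v
    simp only [LinearEquiv.coe_coe] at e2
    calc ⁅T₁ u, T₂ v⁆ + ⁅(T₂ u : A), T₁ v⁆
        = ⁅T₁ u + T₂ u, T₁ v + T₂ v⁆ - (⁅T₁ u, T₁ v⁆ + ⁅(T₂ u : A), T₂ v⁆) := by
          simp only [add_lie, lie_add]; abel
      _ = (T₁ (ρ (T₁ u + T₂ u) v - ρ (T₁ v + T₂ v) u)
            + T₂ (ρ (T₁ u + T₂ u) v - ρ (T₁ v + T₂ v) u))
          - (T₁ (ρ (T₁ u) v - ρ (T₁ v) u) + T₂ (ρ (T₂ u) v - ρ (T₂ v) u)) := by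
          rw [h, e1, e2]
      _ = T₁ (ρ (T₂ u) v - ρ (T₂ v) u) + T₂ (ρ (T₁ u) v - ρ (T₁ v) u) := by
          simp only [map_add, map_sub, LinearMap.add_apply]; abel
  intro a b
  obtain ⟨u, rfl⟩ : ∃ u, T₂ u = a := ⟨T₂.symm a, T₂.apply_symm_apply a⟩
  obtain ⟨v, rfl⟩ : ∃ v, T₂ v = b := ⟨T₂.symm b, T₂.apply_symm_apply b⟩
  have e2 := h₂ u v
  simp only [LinearEquiv.coe_coe] at e2
  simp only [LinearMap.comp_apply, LinearEquiv.coe_coe, LinearEquiv.symm_apply_apply]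
  rw [e2, LinearEquiv.symm_apply_apply]
  have : ⁅T₁ u, T₂ v⁆ + ⁅(T₂ u : A), T₁ v⁆ - T₁ (ρ (T₂ u) v - ρ (T₂ v) u)
      = T₂ (ρ (T₁ u) v - ρ (T₁ v) u) := by rw [hmix u v]; abel
  rw [this, LinearEquiv.symm_apply_apply, ← h₁ u v]
end

section
/- Let T₁, T₂ be invertible O-operators on a Lie algebra A with representation (V;ρ). Then T₁ and T₂ are compatible if and only if N = T₁∘T₂⁻¹ is a Nijenhuis operator on A. -/
section Aux

variable {K A V : Type*} [Field K] [LieRing A] [LieAlgebra K A]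
  [AddCommGroup V] [Module K V]

/-- Compatibility is equivalent to the mixed identity. -/
lemma compatible_iff_mixed (ρ : A →ₗ[K] V →ₗ[K] V) (T₁ T₂ : V →ₗ[K] A)
    (h₁ : IsOOperator ρ T₁) (h₂ : IsOOperator ρ T₂) :
    Compatible ρ T₁ T₂ ↔ ∀ u v : V,
      ⁅T₁ u, T₂ v⁆ + ⁅T₂ u, T₁ v⁆ =
        T₁ (ρ (T₂ u) v - ρ (T₂ v) u) + T₂ (ρ (T₁ u) v - ρ (T₁ v) u) := by
  constructor
  · intro hc u v
    have h := hc 1 1 u v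
    have e1 := h₁ u v
    have e2 := h₂ u v
    simp only [LinearMap.add_apply, LinearMap.smul_apply, one_smul,
      add_lie, lie_add, map_add, map_sub] at h e1 e2 ⊢
    linear_combination (norm := module) h - e1 - e2
  · intro hC k₁ k₂ u v
    have e1 := h₁ u v
    have e2 := h₂ u v
    have e3 := hC u v
    simp only [LinearMap.add_apply, LinearMap.smul_apply, add_lie, lie_add,
      smul_lie, lie_smul, map_add, map_smul, map_sub, smul_sub, smul_add,
      smul_smul] at e1 e2 e3 ⊢
    linear_combination (norm := module) (k₁ * k₁) • e1 + (k₂ * k₂) • e2 +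
      (k₁ * k₂) • e3

end Aux

/-- Two invertible O-operators are compatible if and only if `T₁ ∘ T₂⁻¹` is a
Nijenhuis operator. -/
theorem compatible_iff_nijenhuis_of_invertible {K A V : Type*} [Field K] [LieRing A]
    [LieAlgebra K A] [AddCommGroup V] [Module K V]
    (ρ : A →ₗ[K] V →ₗ[K] V) (hρ : IsRep ρ)
    (T₁ T₂ : V ≃ₗ[K] A)
    (h₁ : IsOOperator ρ (T₁ : V →ₗ[K] A)) (h₂ : IsOOperator ρ (T₂ : V →ₗ[K] A)) :
    Compatible ρ (T₁ : V →ₗ[K] A) (T₂ : V →ₗ[K] A) ↔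
      IsNijenhuis ((T₁ : V →ₗ[K] A) ∘ₗ (T₂.symm : A →ₗ[K] V)) := by
  rw [compatible_iff_mixed ρ _ _ h₁ h₂]
  constructor
  · intro hC a b
    obtain ⟨u, rfl⟩ := T₂.surjective a
    obtain ⟨v, rfl⟩ := T₂.surjective b
    have e1 := h₁ u v
    have e2 := h₂ u v
    have e3 := hC u v
    simp only [LinearEquiv.coe_coe] at e1 e2 e3
    simp only [LinearMap.coe_comp, Function.comp_apply, LinearEquiv.coe_coe,
      LinearEquiv.symm_apply_apply]
    rw [e2, LinearEquiv.symm_apply_apply]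
    have : ⁅T₁ u, T₂ v⁆ + ⁅T₂ u, T₁ v⁆
        - T₁ (ρ (T₂ u) v - ρ (T₂ v) u) = T₂ (ρ (T₁ u) v - ρ (T₁ v) u) := by
      linear_combination (norm := module) e3
    rw [this, LinearEquiv.symm_apply_apply, ← e1]
  · intro hN u v
    have h := hN (T₂ u) (T₂ v)
    simp only [LinearMap.coe_comp, Function.comp_apply, LinearEquiv.coe_coe,
      LinearEquiv.symm_apply_apply] at h
    have e1 := h₁ u v
    have e2 := h₂ u v
    simp only [LinearEquiv.coe_coe] at e1 e2 ⊢
    rw [e2, LinearEquiv.symm_apply_apply, e1] at h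
    have h' := congrArg T₁.symm h
    simp only [LinearEquiv.symm_apply_apply] at h'
    have h'' := congrArg (⇑T₂) h'
    simp only [LinearEquiv.apply_symm_apply] at h''
    linear_combination (norm := module) h''
end

section
/- Let (T,N,S) be an ON-structure on a Lie algebra A with representation (V;ρ). Then S is a Nijenhuis operator on the Lie algebra (V,[·,·]^T), where [u,v]^T = ρ(T(u))(v) − ρ(T(v))(u). -/
/-- For an ON-structure `(T,N,S)`, `S` is a Nijenhuis operator on the Lie algebra
`(V, [·,·]^T)`. -/
theorem on_structure_S_nijenhuis {K A V : Type*} [Field K] [LieRing A] [LieAlgebra K A]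
    [AddCommGroup V] [Module K V]
    (ρ : A →ₗ[K] V →ₗ[K] V) (hρ : IsRep ρ)
    (T : V →ₗ[K] A) (N : A →ₗ[K] A) (S : V →ₗ[K] V)
    (hON : IsONStructure ρ T N S)
    (brT : V → V → V)
    (hbrT : ∀ u v : V, brT u v = ρ (T u) v - ρ (T v) u) :
    ∀ u v : V, S (brT (S u) v + brT u (S v) - S (brT u v)) = brT (S u) (S v) := by
  obtain ⟨hT, ⟨hN, hNS⟩, hNT, h4⟩ := hON
  have hnt : ∀ v : V, N (T v) = T (S v) := fun v => DFunLike.congr_fun hNT v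
  -- key identity: S (ρ(Tu)v - ρ(Tv)u) = ρ(Tu)(Sv) - ρ(Tv)(Su)
  have key : ∀ u v : V, S (ρ (T u) v - ρ (T v) u) = ρ (T u) (S v) - ρ (T v) (S u) := by
    intro u v
    have h := h4 u v
    rw [hnt u, hnt v] at h
    linear_combination (norm := abel) h
  -- condition 2 specialized with a := T a and N (T a) = T (S a)
  have c2 : ∀ a b : V, ρ (T (S a)) (S b) =
      S (ρ (T (S a)) b) + ρ (T a) (S (S b)) - S (ρ (T a) (S b)) := by
    intro a b
    have h := hNS (T a) b
    rw [hnt a] at h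
    exact h
  intro u v
  simp only [hbrT, map_add, map_sub]
  have e1 := key (S u) v
  have e2 := key u (S v)
  have e3 := congrArg S (key u v)
  have e4 := c2 u v
  have e5 := c2 v u
  simp only [map_sub] at e1 e2 e3
  linear_combination (norm := abel) e1 - e3 + e5
end

section
/- Let (T,N,S) be an ON-structure on a Lie algebra A with representation (V;ρ). Then N∘T is an O-operator on (A;ρ). -/
/-- For an ON-structure `(T,N,S)`, the map `N ∘ T` is an O-operator. -/
theorem on_structure_NT_ooperator {K A V : Type*} [Field K] [LieRing A] [LieAlgebra K A]
    [AddCommGroup V] [Module K V]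
    (ρ : A →ₗ[K] V →ₗ[K] V) (hρ : IsRep ρ)
    (T : V →ₗ[K] A) (N : A →ₗ[K] A) (S : V →ₗ[K] V)
    (hON : IsONStructure ρ T N S) :
    IsOOperator ρ (N ∘ₗ T) := by
  obtain ⟨hT, ⟨hN, _⟩, hNT, hcomp⟩ := hON
  have hNTapp : ∀ v : V, N (T v) = T (S v) := fun v => congrArg (· v) hNT
  intro u v
  have key : ⁅N (T u), T v⁆ + ⁅T u, N (T v)⁆ - N ⁅T u, T v⁆
      = T (ρ (T (S u)) v - ρ (T v) (S u) + (ρ (T u) (S v) - ρ (T (S v)) u)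
          - S (ρ (T u) v - ρ (T v) u)) := by
    rw [hNTapp u, hNTapp v, hT, hT, hT, hNTapp]
    simp only [map_add, map_sub]
  simp only [LinearMap.comp_apply]
  rw [← hN (T u) (T v), hcomp u v, key]
end

section
/- Let (T,N,S) be an ON-structure on a Lie algebra A with representation (V;ρ). Then T and T∘S are compatible O-operators, i.e. T + T∘S is again an O-operator. -/
/-- For an ON-structure `(T,N,S)`, the O-operators `T` and `T ∘ S` are compatible;
in particular `T + T ∘ S` is again an O-operator. -/
theorem on_structure_compatible {K A V : Type*} [Field K] [LieRing A] [LieAlgebra K A]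
    [AddCommGroup V] [Module K V]
    (ρ : A →ₗ[K] V →ₗ[K] V) (hρ : IsRep ρ)
    (T : V →ₗ[K] A) (N : A →ₗ[K] A) (S : V →ₗ[K] V)
    (hON : IsONStructure ρ T N S) :
    Compatible ρ T (T ∘ₗ S) ∧ IsOOperator ρ (T + T ∘ₗ S) := by
  obtain ⟨hT, ⟨hN, hNS⟩, hNT, hstar⟩ := hON
  have hNTv : ∀ v, N (T v) = T (S v) := fun v => LinearMap.congr_fun hNT v
  -- star rewritten with T∘S
  have hstar' : ∀ u v : V, ρ (T (S u)) v - ρ (T (S v)) u =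
      (ρ (T (S u)) v - ρ (T v) (S u)) + (ρ (T u) (S v) - ρ (T (S v)) u)
        - S (ρ (T u) v - ρ (T v) u) := by
    intro u v
    have := hstar u v
    rwa [hNTv u, hNTv v] at this
  have mixed : ∀ u v : V, ⁅T u, T (S v)⁆ + ⁅T (S u), T v⁆ =
      T (ρ (T (S u)) v - ρ (T (S v)) u) + T (S (ρ (T u) v - ρ (T v) u)) := by
    intro u v
    rw [hT u (S v), hT (S u) v, ← map_add, ← map_add, hstar' u v]
    congr 1
    abel
  have hTS : ∀ u v : V, ⁅T (S u), T (S v)⁆ = T (S (ρ (T (S u)) v - ρ (T (S v)) u)) := by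
    intro u v
    have hnij := hN (T u) (T v)
    rw [hNTv u, hNTv v] at hnij
    rw [← hnij, hT (S u) v, hT u (S v), hT u v, hNTv, ← map_add, ← map_sub, hNTv,
      ← hstar' u v]
  have comp : Compatible ρ T (T ∘ₗ S) := by
    intro k₁ k₂ u v
    simp only [LinearMap.add_apply, LinearMap.smul_apply, LinearMap.comp_apply,
      map_add, map_smul, lie_add, add_lie, lie_smul, smul_lie, map_sub]
    have h1 := hT u v
    have h2 := mixed u v
    have h3 := hTS u v
    simp only [map_sub, map_add] at h1 h2 h3 ⊢
    linear_combination (norm := module) (k₁ * k₁) • h1 + (k₁ * k₂) • h2 + (k₂ * k₂) • h3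
  refine ⟨comp, ?_⟩
  have := comp 1 1
  simpa using this
end

section
/- Let T and T₁ be O-operators on a Lie algebra A with representation (V;ρ), with T invertible. If T and T₁ are compatible, then (T, N, S) with N = T₁∘T⁻¹ and S = T⁻¹∘T₁ is an ON-structure on (A;ρ). -/
/-- Compatible O-operators with one of them invertible give rise to an ON-structure. -/
theorem on_structure_of_compatible {K A V : Type*} [Field K] [LieRing A] [LieAlgebra K A]
    [AddCommGroup V] [Module K V]
    (ρ : A →ₗ[K] V →ₗ[K] V) (hρ : IsRep ρ)
    (T : V ≃ₗ[K] A) (hT : IsOOperator ρ (T : V →ₗ[K] A))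
    (T₁ : V →ₗ[K] A) (hT₁ : IsOOperator ρ T₁)
    (hcomp : Compatible ρ (T : V →ₗ[K] A) T₁) :
    IsONStructure ρ (T : V →ₗ[K] A)
      (T₁ ∘ₗ (T.symm : A →ₗ[K] V)) ((T.symm : A →ₗ[K] V) ∘ₗ T₁) := by
  set S : V →ₗ[K] V := (T.symm : A →ₗ[K] V) ∘ₗ T₁ with hSdef
  have hTS : ∀ w : V, (T : V →ₗ[K] A) (S w) = T₁ w := by
    intro w; simp [hSdef]
  have hNT : ∀ x : V, (T₁ ∘ₗ (T.symm : A →ₗ[K] V)) ((T : V →ₗ[K] A) x)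
      = (T : V →ₗ[K] A) (S x) := by
    intro x; simp [hSdef]
  have hsurj : ∀ a : A, ∃ u : V, (T : V →ₗ[K] A) u = a := by
    intro a; exact ⟨T.symm a, by simp⟩
  have hinj : ∀ x y : V, (T : V →ₗ[K] A) x = (T : V →ₗ[K] A) y → x = y := by
    intro x y h
    have := congrArg (T.symm : A →ₗ[K] V) h
    simpa using this
  have key : ∀ u v : V,
      (T : V →ₗ[K] A) (S (ρ ((T : V →ₗ[K] A) u) v - ρ ((T : V →ₗ[K] A) v) u)) =
      (T : V →ₗ[K] A) (ρ ((T : V →ₗ[K] A) u) (S v) - ρ ((T : V →ₗ[K] A) v) (S u)) := by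
    intro u v
    have h := hcomp 1 1 u v
    simp only [one_smul, LinearMap.add_apply, map_add, map_sub, add_lie, lie_add] at h
    rw [hT u v, hT₁ u v, ← hTS u, ← hTS v, hT u (S v), hT (S u) v] at h
    rw [hTS]
    simp only [map_sub] at h ⊢
    have h0 := sub_eq_zero.mpr h.symm
    rw [← sub_eq_zero, ← h0]
    abel
  have L1 : ∀ u v : V, S (ρ ((T : V →ₗ[K] A) u) v - ρ ((T : V →ₗ[K] A) v) u)
      = ρ ((T : V →ₗ[K] A) u) (S v) - ρ ((T : V →ₗ[K] A) v) (S u) :=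
    fun u v => hinj _ _ (key u v)
  have key2 : ∀ u v : V,
      (T : V →ₗ[K] A) (S (ρ ((T : V →ₗ[K] A) (S u)) v - ρ ((T : V →ₗ[K] A) (S v)) u)) =
      (T : V →ₗ[K] A)
        (ρ ((T : V →ₗ[K] A) (S u)) (S v) - ρ ((T : V →ₗ[K] A) (S v)) (S u)) := by
    intro u v
    calc (T : V →ₗ[K] A) (S (ρ ((T : V →ₗ[K] A) (S u)) v - ρ ((T : V →ₗ[K] A) (S v)) u))
        = T₁ (ρ (T₁ u) v - ρ (T₁ v) u) := by rw [hTS, hTS u, hTS v]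
      _ = ⁅T₁ u, T₁ v⁆ := (hT₁ u v).symm
      _ = ⁅(T : V →ₗ[K] A) (S u), (T : V →ₗ[K] A) (S v)⁆ := by rw [hTS u, hTS v]
      _ = (T : V →ₗ[K] A)
            (ρ ((T : V →ₗ[K] A) (S u)) (S v) - ρ ((T : V →ₗ[K] A) (S v)) (S u)) :=
        hT (S u) (S v)
  have L2 : ∀ u v : V,
      S (ρ ((T : V →ₗ[K] A) (S u)) v - ρ ((T : V →ₗ[K] A) (S v)) u)
      = ρ ((T : V →ₗ[K] A) (S u)) (S v) - ρ ((T : V →ₗ[K] A) (S v)) (S u) :=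
    fun u v => hinj _ _ (key2 u v)
  have L1' : ∀ u v : V, S (ρ ((T : V →ₗ[K] A) u) v) - S (ρ ((T : V →ₗ[K] A) v) u)
      = ρ ((T : V →ₗ[K] A) u) (S v) - ρ ((T : V →ₗ[K] A) v) (S u) := by
    intro u v; have := L1 u v; rwa [map_sub] at this
  have L2' : ∀ u v : V,
      S (ρ ((T : V →ₗ[K] A) (S u)) v) - S (ρ ((T : V →ₗ[K] A) (S v)) u)
      = ρ ((T : V →ₗ[K] A) (S u)) (S v) - ρ ((T : V →ₗ[K] A) (S v)) (S u) := by
    intro u v; have := L2 u v; rwa [map_sub] at this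
  have D' : ∀ u v : V,
      S (ρ ((T : V →ₗ[K] A) u) (S v)) - S (ρ ((T : V →ₗ[K] A) v) (S u))
      = ρ ((T : V →ₗ[K] A) u) (S (S v)) - ρ ((T : V →ₗ[K] A) v) (S (S u)) := by
    intro u v
    have h0 := sub_eq_zero.mpr
      (congrArg₂ (· + ·) (L1' (S u) v) (congrArg₂ (· - ·) (L1' u (S v)) (L2' u v)))
    rw [← sub_eq_zero, ← h0]
    abel
  refine ⟨hT, ⟨?_, ?_⟩, ?_, ?_⟩
  · -- Nijenhuis
    intro a b
    obtain ⟨u, rfl⟩ := hsurj a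
    obtain ⟨v, rfl⟩ := hsurj b
    rw [hNT u, hNT v, hT u v,
      hNT (ρ ((T : V →ₗ[K] A) u) v - ρ ((T : V →ₗ[K] A) v) u),
      L1 u v, hT (S u) v, hT u (S v), ← map_add, ← map_sub, hNT]
    rw [show (ρ ((T : V →ₗ[K] A) (S u)) v - ρ ((T : V →ₗ[K] A) v) (S u)) +
          (ρ ((T : V →ₗ[K] A) u) (S v) - ρ ((T : V →ₗ[K] A) (S v)) u) -
          (ρ ((T : V →ₗ[K] A) u) (S v) - ρ ((T : V →ₗ[K] A) v) (S u)) =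
          ρ ((T : V →ₗ[K] A) (S u)) v - ρ ((T : V →ₗ[K] A) (S v)) u from by abel]
    rw [L2 u v]
    exact (hT (S u) (S v)).symm
  · -- S-compatibility
    intro a v
    obtain ⟨u, rfl⟩ := hsurj a
    rw [hNT u]
    have h0 := sub_eq_zero.mpr (congrArg₂ (· + ·) (L1' (S u) v).symm (D' u v))
    rw [← sub_eq_zero, ← h0]
    abel
  · -- N ∘ T = T ∘ S
    apply LinearMap.ext
    intro w
    simp [hSdef]
  · -- last condition
    intro u v
    rw [hNT u, hNT v, L1 u v]
    abel
end

section
/- Let ω be a symplectic structure on a finite-dimensional Lie algebra A and N a Nijenhuis operator on A such that (ω,N) is a symplectic-Nijenhuis structure. Then for every natural number k, the 2-form ω_{N^k}(a,b) := ω(N^k(a),b) is a 2-cocycle, i.e. ω_{N^k}([a,b],c) + ω_{N^k}([b,c],a) + ω_{N^k}([c,a],b) = 0 for all a,b,c ∈ A. -/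
/-- For a symplectic-Nijenhuis structure `(ω, N)`, each 2-form `ω_{N^k}(a,b) = ω(N^k a, b)`
is a 2-cocycle. -/
theorem symplectic_nijenhuis_pow_cocycle {K A : Type*} [Field K] [LieRing A]
    [LieAlgebra K A] [FiniteDimensional K A]
    (ω : A →ₗ[K] A →ₗ[K] K)
    (hskew : ∀ a b : A, ω a b = - ω b a)
    (hnd : ∀ a : A, (∀ b : A, ω a b = 0) → a = 0)
    (hcocycle : ∀ a b c : A, ω ⁅a, b⁆ c + ω ⁅b, c⁆ a + ω ⁅c, a⁆ b = 0)
    (N : A →ₗ[K] A) (hN : IsNijenhuis N)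
    (hsym : ∀ a b : A, ω (N a) b = ω a (N b))
    (hωN : ∀ a b c : A, ω (N ⁅a, b⁆) c + ω (N ⁅b, c⁆) a + ω (N ⁅c, a⁆) b = 0) :
    ∀ (k : ℕ) (a b c : A),
      ω ((N ^ k) ⁅a, b⁆) c + ω ((N ^ k) ⁅b, c⁆) a + ω ((N ^ k) ⁅c, a⁆) b = 0 := by
  -- move an `N` from the second slot of `ω` into a power in the first slot
  have hmov : ∀ (m : ℕ) (x y : A), ω ((N ^ m) x) (N y) = ω ((N ^ (m + 1)) x) y := by
    intro m x y
    have h : (N ^ (m + 1)) x = N ((N ^ m) x) := by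
      rw [pow_succ']; rfl
    rw [h, hsym]
  -- key consequence of the Nijenhuis condition, iterated
  have hkey : ∀ (m : ℕ) (a b : A),
      (N ^ m) ⁅N a, N b⁆ =
        (N ^ (m + 1)) ⁅N a, b⁆ + (N ^ (m + 1)) ⁅a, N b⁆ - (N ^ (m + 2)) ⁅a, b⁆ := by
    intro m a b
    have h1 : (N ^ (m + 1)) (⁅N a, b⁆ + ⁅a, N b⁆ - N ⁅a, b⁆) = (N ^ m) ⁅N a, N b⁆ := by
      rw [pow_succ]
      show (N ^ m) (N (⁅N a, b⁆ + ⁅a, N b⁆ - N ⁅a, b⁆)) = _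
      rw [hN a b]
    have h2 : (N ^ (m + 1)) (N ⁅a, b⁆) = (N ^ (m + 2)) ⁅a, b⁆ := by
      conv_rhs => rw [pow_succ]
      rfl
    rw [← h1, map_sub, map_add, h2]
  -- two-step induction
  suffices h : ∀ k : ℕ,
      (∀ a b c : A,
        ω ((N ^ k) ⁅a, b⁆) c + ω ((N ^ k) ⁅b, c⁆) a + ω ((N ^ k) ⁅c, a⁆) b = 0) ∧
      (∀ a b c : A,
        ω ((N ^ (k + 1)) ⁅a, b⁆) c + ω ((N ^ (k + 1)) ⁅b, c⁆) a
          + ω ((N ^ (k + 1)) ⁅c, a⁆) b = 0) by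
    exact fun k => (h k).1
  intro k
  induction k with
  | zero =>
    constructor
    · simpa using hcocycle
    · simpa using hωN
  | succ k ih =>
    refine ⟨ih.2, ?_⟩
    intro a b c
    have h1 := ih.2 (N a) b c
    have h2 := ih.2 a (N b) c
    have h3 := ih.1 (N a) (N b) c
    rw [hmov] at h1 h2 h3
    rw [hmov] at h3
    rw [hkey k a b] at h3
    simp only [map_add, map_sub, LinearMap.add_apply, LinearMap.sub_apply] at h3
    linear_combination h1 + h2 - h3
end

section
/- Let A be a finite-dimensional Lie algebra, ω a nondegenerate skew-symmetric bilinear 2-cocycle on A, i.e. a symplectic structure, and let ω♮ : A → A* be the induced isomorphism ω♮(a)(b) = ω(a,b). Then (ω♮)⁻¹ : A* → A is an O-operator on A with respect to the coadjoint representation ad*. -/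
/-- The inverse of the musical map of a symplectic structure is an O-operator with
respect to the coadjoint representation. -/
theorem symplectic_inverse_ooperator {K A : Type*} [Field K] [LieRing A] [LieAlgebra K A]
    [FiniteDimensional K A]
    (ω : A →ₗ[K] A →ₗ[K] K)
    (hskew : ∀ a b : A, ω a b = - ω b a)
    (hnd : ∀ a : A, (∀ b : A, ω a b = 0) → a = 0)
    (hcocycle : ∀ a b c : A, ω ⁅a, b⁆ c + ω ⁅b, c⁆ a + ω ⁅c, a⁆ b = 0)
    (coad : A →ₗ[K] Module.Dual K A →ₗ[K] Module.Dual K A)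
    (hcoad : ∀ (a : A) (α : Module.Dual K A) (b : A), coad a α b = - α ⁅a, b⁆)
    (T : Module.Dual K A →ₗ[K] A)
    (hT₁ : ∀ a : A, T (ω a) = a)
    (hT₂ : ∀ α : Module.Dual K A, ω (T α) = α) :
    IsOOperator coad T := by
  intro u v
  have key : ω ⁅T u, T v⁆ = coad (T u) v - coad (T v) u := by
    ext c
    have h := hcocycle (T u) (T v) c
    have h1 : ω ⁅T v, c⁆ (T u) = - ω (T u) ⁅T v, c⁆ := hskew _ _
    have h2 : ω ⁅c, T u⁆ (T v) = - ω (T v) ⁅c, T u⁆ := hskew _ _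
    have h3 : ω (T v) ⁅c, T u⁆ = - ω (T v) ⁅T u, c⁆ := by
      rw [← lie_skew, map_neg]
    have h4 : u ⁅T v, c⁆ = ω (T u) ⁅T v, c⁆ := by rw [hT₂]
    have h5 : v ⁅T u, c⁆ = ω (T v) ⁅T u, c⁆ := by rw [hT₂]
    simp only [LinearMap.sub_apply, hcoad]
    linear_combination h - h1 - h2 + h3 + h5 - h4
  rw [← hT₁ ⁅T u, T v⁆, key]
end

section
/- Let A be a finite-dimensional Lie algebra, ω a nondegenerate skew-symmetric bilinear form on A satisfying the 2-cocycle condition, and N a Nijenhuis operator on A. Then (ω,N) is a symplectic-Nijenhuis structure on A if and only if ((ω♮)⁻¹, N, N*) is an ON-structure on A with respect to the coadjoint representation ad*, where ω♮(a)(b) = ω(a,b) and N* is the dual map of N. -/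
/-- `(ω, N)` is a symplectic-Nijenhuis structure if and only if `((ω♮)⁻¹, N, N*)` is an
ON-structure with respect to the coadjoint representation. -/
theorem symplectic_nijenhuis_iff_on_structure {K A : Type*} [Field K] [LieRing A]
    [LieAlgebra K A] [FiniteDimensional K A]
    (ω : A →ₗ[K] A →ₗ[K] K)
    (hskew : ∀ a b : A, ω a b = - ω b a)
    (hnd : ∀ a : A, (∀ b : A, ω a b = 0) → a = 0)
    (hcocycle : ∀ a b c : A, ω ⁅a, b⁆ c + ω ⁅b, c⁆ a + ω ⁅c, a⁆ b = 0)
    (N : A →ₗ[K] A) (hN : IsNijenhuis N)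
    (coad : A →ₗ[K] Module.Dual K A →ₗ[K] Module.Dual K A)
    (hcoad : ∀ (a : A) (α : Module.Dual K A) (b : A), coad a α b = - α ⁅a, b⁆)
    (T : Module.Dual K A →ₗ[K] A)
    (hT₁ : ∀ a : A, T (ω a) = a)
    (hT₂ : ∀ α : Module.Dual K A, ω (T α) = α) :
    ((∀ a b : A, ω (N a) b = ω a (N b)) ∧
      (∀ a b c : A, ω (N ⁅a, b⁆) c + ω (N ⁅b, c⁆) a + ω (N ⁅c, a⁆) b = 0)) ↔
      IsONStructure coad T N N.dualMap := by

  -- basic scalar consequence of the cocycle condition and skew-symmetry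
  have hkey : ∀ a c b : A, ω ⁅a, c⁆ b = ω a ⁅c, b⁆ - ω c ⁅a, b⁆ := by
    intro a c b
    have h := hcocycle a c b
    have h1 := hskew ⁅c, b⁆ a
    have h2 : ω ⁅b, a⁆ c = - ω ⁅a, b⁆ c := by
      rw [← lie_skew a b, map_neg]; simp
    have h3 := hskew ⁅a, b⁆ c
    linear_combination h - h1 - h2 + h3
  -- T is always an O-operator
  have hO : IsOOperator coad T := by
    intro u v
    have h : ω ⁅T u, T v⁆ = coad (T u) v - coad (T v) u := by
      refine LinearMap.ext fun b => ?_
      have hu := DFunLike.congr_fun (hT₂ u) ⁅T v, b⁆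
      have hv := DFunLike.congr_fun (hT₂ v) ⁅T u, b⁆
      have hk := hkey (T u) (T v) b
      simp only [LinearMap.sub_apply, hcoad]
      linear_combination hk + hu - hv
    calc ⁅T u, T v⁆ = T (ω ⁅T u, T v⁆) := (hT₁ _).symm
      _ = T (coad (T u) v - coad (T v) u) := by rw [h]
  -- the Nijenhuis-structure condition holds unconditionally given hN
  have hNS : IsNijenhuisStructure coad N N.dualMap := by
    refine ⟨hN, fun a v => ?_⟩
    refine LinearMap.ext fun b => ?_
    have h := hN a b
    have h' : N ⁅N a, b⁆ + N ⁅a, N b⁆ - N (N ⁅a, b⁆) = ⁅N a, N b⁆ := by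
      rw [← h, map_sub, map_add]
    have hv := congrArg v h'
    simp only [map_add, map_sub] at hv
    simp only [LinearMap.add_apply, LinearMap.sub_apply, LinearMap.dualMap_apply,
      hcoad, LinearMap.coe_comp, Function.comp_apply]
    linear_combination -hv
  -- the core scalar identity, given the symmetry condition
  have core : ∀ (hsym : ∀ a b : A, ω (N a) b = ω a (N b)) (a c b : A),
      ω a (N ⁅c, b⁆) - ω c (N ⁅a, b⁆) + ω c ⁅a, N b⁆ - ω a ⁅c, N b⁆
        = ω (N ⁅a, b⁆) c + ω (N ⁅b, c⁆) a + ω (N ⁅c, a⁆) b := by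
    intro hsym a c b
    have h1 := hskew a (N ⁅c, b⁆)
    have h2 := hskew c (N ⁅a, b⁆)
    have h3 := hcocycle a (N b) c
    have h4 := hsym ⁅c, a⁆ b
    have h5 := hskew c ⁅a, N b⁆
    have h6 := hskew a ⁅c, N b⁆
    have h7 : ω ⁅c, N b⁆ a = - ω ⁅N b, c⁆ a := by
      rw [← lie_skew (N b) c, map_neg]; simp
    have h8 : ω (N ⁅c, b⁆) a = - ω (N ⁅b, c⁆) a := by
      rw [← lie_skew b c, map_neg, map_neg]; simp
    linear_combination h1 - h2 - h3 - h4 + h5 - h6 + h7 - h8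
  constructor
  · rintro ⟨hsym, hcoc⟩
    have hNT : N ∘ₗ T = T ∘ₗ N.dualMap := by
      refine LinearMap.ext fun α => ?_
      have h : ω (N (T α)) = N.dualMap α := by
        refine LinearMap.ext fun b => ?_
        rw [LinearMap.dualMap_apply, hsym, DFunLike.congr_fun (hT₂ α) (N b)]
      calc N (T α) = T (ω (N (T α))) := (hT₁ _).symm
        _ = T (N.dualMap α) := by rw [h]
    refine ⟨hO, hNS, hNT, fun u v => ?_⟩
    have hNT' : ∀ α, T (N.dualMap α) = N (T α) := fun α =>
      (DFunLike.congr_fun hNT α).symm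
    refine LinearMap.ext fun b => ?_
    set a := T u with ha
    set c := T v with hc
    have hu : ∀ x, u x = ω a x := fun x => (DFunLike.congr_fun (hT₂ u) x).symm
    have hv : ∀ x, v x = ω c x := fun x => (DFunLike.congr_fun (hT₂ v) x).symm
    have hcore := core hsym a c b
    have hz := hcoc a b c
    simp only [hNT', LinearMap.sub_apply, LinearMap.add_apply, map_sub,
      LinearMap.dualMap_apply, hcoad, hu, hv]
    linear_combination -hcore - hz
  · rintro ⟨-, -, hNT, h4⟩
    have hsym : ∀ a b : A, ω (N a) b = ω a (N b) := by
      intro a b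
      have h := DFunLike.congr_fun hNT (ω a)
      simp only [LinearMap.coe_comp, Function.comp_apply, hT₁] at h
      rw [h, DFunLike.congr_fun (hT₂ (N.dualMap (ω a))) b, LinearMap.dualMap_apply]
    refine ⟨hsym, fun a b c => ?_⟩
    have hcore := core hsym a c b
    have h := DFunLike.congr_fun (h4 (ω a) (ω c)) b
    have hNT' : ∀ α, T (N.dualMap α) = N (T α) := fun α =>
      (DFunLike.congr_fun hNT α).symm
    simp only [hT₁, hNT', LinearMap.sub_apply, LinearMap.add_apply, map_sub,
      LinearMap.dualMap_apply, hcoad] at h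
    linear_combination -hcore - h
end

section
/- Let (T,N,S) be an ON-structure on a Lie algebra A with representation (V;ρ). Then for all natural numbers k, the maps T_k := N^k∘T are O-operators on (A;ρ), and T_k and T_l are compatible for all k,l ∈ ℕ. -/
/-- Auxiliary: the mixed (cross) O-operator condition for `N^k ∘ T` and `N^l ∘ T`. -/
def MixedOO {K A V : Type*} [Field K] [LieRing A] [LieAlgebra K A]
    [AddCommGroup V] [Module K V]
    (ρ : A →ₗ[K] V →ₗ[K] V) (T : V →ₗ[K] A) (N : A →ₗ[K] A) (k l : ℕ) : Prop :=
  ∀ u v : V,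
    ⁅(N ^ k) (T u), (N ^ l) (T v)⁆ + ⁅(N ^ l) (T u), (N ^ k) (T v)⁆
      = (N ^ k) (T (ρ ((N ^ l) (T u)) v - ρ ((N ^ l) (T v)) u))
        + (N ^ l) (T (ρ ((N ^ k) (T u)) v - ρ ((N ^ k) (T v)) u))

/-- For an ON-structure `(T,N,S)`, all `T_k = N^k ∘ T` are O-operators and pairwise
compatible. -/
theorem on_structure_hierarchy {K A V : Type*} [Field K] [LieRing A] [LieAlgebra K A]
    [AddCommGroup V] [Module K V]
    (ρ : A →ₗ[K] V →ₗ[K] V) (hρ : IsRep ρ)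
    (T : V →ₗ[K] A) (N : A →ₗ[K] A) (S : V →ₗ[K] V)
    (hON : IsONStructure ρ T N S) :
    (∀ k : ℕ, IsOOperator ρ ((N ^ k : A →ₗ[K] A) ∘ₗ T)) ∧
    (∀ k l : ℕ, Compatible ρ ((N ^ k : A →ₗ[K] A) ∘ₗ T) ((N ^ l : A →ₗ[K] A) ∘ₗ T)) := by
  obtain ⟨hTo, ⟨hNij, hSc⟩, hNTc, h5⟩ := hON
  have hNT : ∀ u : V, N (T u) = T (S u) := fun u => by
    simpa using LinearMap.congr_fun hNTc u
  have hTo : ∀ u v : V, ⁅T u, T v⁆ = T (ρ (T u) v - ρ (T v) u) := hTo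
  -- pointwise power lemmas
  have hp1 : ∀ (k : ℕ) (x : A), (N ^ (k+1)) x = N ((N ^ k) x) := by
    intro k x; rw [pow_succ']; rfl
  have hp2 : ∀ (k : ℕ) (u : V), (N ^ (k+1)) (T u) = (N ^ k) (T (S u)) := by
    intro k u
    rw [pow_succ]
    show (N ^ k) (N (T u)) = _
    rw [hNT]
  -- E₀
  have E0 : ∀ u v : V, ρ (T u) (S v) - ρ (T v) (S u) = S (ρ (T u) v - ρ (T v) u) := by
    intro u v
    have h := h5 u v
    rw [hNT u, hNT v] at h
    simp only [map_sub] at h ⊢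
    linear_combination (norm := module) -h
  -- E_k
  have Ek : ∀ (k : ℕ) (u v : V),
      ρ ((N ^ k) (T u)) (S v) - ρ ((N ^ k) (T v)) (S u)
        = S (ρ ((N ^ k) (T u)) v - ρ ((N ^ k) (T v)) u) := by
    intro k
    induction k with
    | zero => simpa using E0
    | succ k ih =>
      intro u v
      have h1 := hSc ((N ^ k) (T u)) v
      have h2 := ih u (S v)
      rw [hp1 k (T u), hp2 k v]
      simp only [map_sub] at h2 ⊢
      linear_combination (norm := module) h1 + h2
  -- O-operator for each k
  have Ok : ∀ (k : ℕ) (u v : V),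
      ⁅(N ^ k) (T u), (N ^ k) (T v)⁆
        = (N ^ k) (T (ρ ((N ^ k) (T u)) v - ρ ((N ^ k) (T v)) u)) := by
    intro k
    induction k with
    | zero => simpa using hTo
    | succ k ih =>
      intro u v
      have hc : ∀ w, N ((N ^ k) (T w)) = (N ^ k) (T (S w)) := fun w => by
        rw [← hp1, hp2]
      have hb := hNij ((N ^ k) (T u)) ((N ^ k) (T v))
      rw [ih u v, hc u, hc v, ih (S u) v, ih u (S v)] at hb
      rw [hp2 k u, hp2 k v, hp1 k, ← hb]
      refine congrArg N ?_
      have e : (N ^ k) (T (ρ ((N ^ k) (T u)) (S v) - ρ ((N ^ k) (T v)) (S u)))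
          = (N ^ k) (T (S (ρ ((N ^ k) (T u)) v - ρ ((N ^ k) (T v)) u))) := by
        rw [Ek k u v]
      simp only [hc, map_sub, map_add] at e ⊢
      linear_combination (norm := module) e
  have hcg : ∀ (k : ℕ) (w : V), N ((N ^ k) (T w)) = (N ^ k) (T (S w)) := fun k w => by
    rw [← hp1, hp2]
  -- mixed condition
  have mzdiag : ∀ (k : ℕ) (u v : V),
      ⁅(N ^ k) (T u), (N ^ k) (T v)⁆ + ⁅(N ^ k) (T u), (N ^ k) (T v)⁆
        = (N ^ k) (T (ρ ((N ^ k) (T u)) v - ρ ((N ^ k) (T v)) u))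
          + (N ^ k) (T (ρ ((N ^ k) (T u)) v - ρ ((N ^ k) (T v)) u)) := by
    intro k u v
    rw [Ok k u v]
  have mzsucc : ∀ (k : ℕ) (u v : V),
      ⁅(N ^ k) (T u), (N ^ (k+1)) (T v)⁆ + ⁅(N ^ (k+1)) (T u), (N ^ k) (T v)⁆
        = (N ^ k) (T (ρ ((N ^ (k+1)) (T u)) v - ρ ((N ^ (k+1)) (T v)) u))
          + (N ^ (k+1)) (T (ρ ((N ^ k) (T u)) v - ρ ((N ^ k) (T v)) u)) := by
    intro k u v
    rw [hp2 k u, hp2 k v, hp1 k, hcg, Ok k u (S v), Ok k (S u) v]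
    have e : (N ^ k) (T (ρ ((N ^ k) (T u)) (S v) - ρ ((N ^ k) (T v)) (S u)))
        = (N ^ k) (T (S (ρ ((N ^ k) (T u)) v - ρ ((N ^ k) (T v)) u))) := by
      rw [Ek k u v]
    simp only [map_sub] at e ⊢
    linear_combination (norm := module) e
  -- step incrementing both indices
  have R1 : ∀ k l : ℕ, MixedOO ρ T N k l → MixedOO ρ T N (k+1) (l+1) := by
    intro k l h u v
    have hb1 := hNij ((N ^ k) (T u)) ((N ^ l) (T v))
    have hb2 := hNij ((N ^ l) (T u)) ((N ^ k) (T v))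
    rw [hcg k u, hcg l v] at hb1
    rw [hcg l u, hcg k v] at hb2
    rw [hp2 k u, hp2 k v, hp2 l u, hp2 l v, hp1 k, hp1 l, ← hb1, ← hb2,
      ← map_add N, ← map_add N]
    refine congrArg N ?_
    have h1 := h (S u) v
    have h2 := h u (S v)
    have h3 := congrArg N (h u v)
    have e1 : (N ^ k) (T (ρ ((N ^ l) (T u)) (S v) - ρ ((N ^ l) (T v)) (S u)))
        = (N ^ k) (T (S (ρ ((N ^ l) (T u)) v - ρ ((N ^ l) (T v)) u))) := by
      rw [Ek l u v]
    have e2 : (N ^ l) (T (ρ ((N ^ k) (T u)) (S v) - ρ ((N ^ k) (T v)) (S u)))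
        = (N ^ l) (T (S (ρ ((N ^ k) (T u)) v - ρ ((N ^ k) (T v)) u))) := by
      rw [Ek k u v]
    simp only [map_add, map_sub, hcg] at h1 h2 h3 e1 e2 ⊢
    linear_combination (norm := module) h1 + h2 - h3 + e1 + e2
  -- step incrementing the second index
  have R2 : ∀ k l : ℕ, MixedOO ρ T N k l → MixedOO ρ T N (k+1) l →
      MixedOO ρ T N k (l+1) := by
    intro k l hkl hk1l u v
    have ha := hkl u (S v)
    have hb := hkl (S u) v
    have hc := hk1l u v
    rw [hp2 k u, hp2 k v, hp1 k, hcg] at hc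
    have e1 : (N ^ k) (T (ρ ((N ^ l) (T u)) (S v) - ρ ((N ^ l) (T v)) (S u)))
        = (N ^ k) (T (S (ρ ((N ^ l) (T u)) v - ρ ((N ^ l) (T v)) u))) := by
      rw [Ek l u v]
    have e2 : (N ^ l) (T (ρ ((N ^ k) (T u)) (S v) - ρ ((N ^ k) (T v)) (S u)))
        = (N ^ l) (T (S (ρ ((N ^ k) (T u)) v - ρ ((N ^ k) (T v)) u))) := by
      rw [Ek k u v]
    rw [hp2 l u, hp2 l v, hp1 l, hcg]
    simp only [map_add, map_sub] at ha hb hc e1 e2 ⊢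
    linear_combination (norm := module) ha + hb - hc + e1 + e2
  -- all mixed conditions hold
  have main : ∀ d k : ℕ, MixedOO ρ T N k (k + d) := by
    intro d
    induction d using Nat.twoStepInduction with
    | zero => exact fun k => mzdiag k
    | one => exact fun k => mzsucc k
    | more d ih1 ih2 =>
      intro k
      have hA : MixedOO ρ T N k (k + (d + 1)) := ih2 k
      have hB : MixedOO ρ T N (k + 1) (k + (d + 1)) := by
        have := ih1 (k + 1)
        rwa [show k + 1 + d = k + (d + 1) by omega] at this
      exact R2 k (k + (d + 1)) hA hB
  have mzall : ∀ k l : ℕ, MixedOO ρ T N k l := by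
    intro k l
    rcases le_total k l with hle | hle
    · obtain ⟨d, rfl⟩ := Nat.exists_eq_add_of_le hle
      exact main d k
    · obtain ⟨d, rfl⟩ := Nat.exists_eq_add_of_le hle
      intro u v
      have := main d l u v
      linear_combination (norm := module) this
  constructor
  · intro k u v
    simp only [LinearMap.comp_apply]
    exact Ok k u v
  · intro k l k₁ k₂ u v
    have h1 := Ok k u v
    have h2 := Ok l u v
    have h3 := mzall k l u v
    simp only [LinearMap.add_apply, LinearMap.smul_apply, LinearMap.comp_apply,
      map_add, map_smul, map_sub, lie_add, add_lie, lie_smul, smul_lie] at h1 h2 h3 ⊢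
    linear_combination (norm := module) (k₁ * k₁) • h1 + (k₂ * k₂) • h2 + (k₁ * k₂) • h3
end
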